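/- For all k ≥ 2, W_k = 01 · ∏_{i=0}^{k-2} (2 ⊕ W_i), where ∏ denotes concatenation in increasing order of i. (For example, W_5 = 01 · 2 · 23 · 234 · 23445.) -/

import Mathlib

/-!
Since `φ(a + 2) = 2 ⊕ φ(a)`, the morphism `φ` commutes with the shift `2 ⊕ ·`. Applying `φ` to
`W (n + 1) = 01 · ∏_{i<n} (2 ⊕ W i)` therefore gives `φ(01) · ∏_{i<n} (2 ⊕ W (i + 1))`, and
`φ(01) = 012 = 01 · (2 ⊕ W 0)`, which is the factorisation of `W (n + 2)`.
-/

/-- The morphism `phi` on the alphabet `ℕ`: `phi (2i) = (2i)(2i+1)` and `phi (2i+1) = (2i+2)`. -/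
def phi (a : ℕ) : List ℕ := if a % 2 = 0 then [a, a + 1] else [a + 1]

/-- The finite ZWW words: `W n = phi^n(0)`, so `W 0 = 0`, `W 1 = 01`, `W 2 = 012`, `W 3 = 01223`. -/
def W (n : ℕ) : List ℕ := (fun w => w.flatMap phi)^[n] [0]

theorem List.flatMap_flatten {α β : Type*} (L : List (List α)) (f : α → List β) :
    L.flatten.flatMap f = (L.map (·.flatMap f)).flatten := by
  simp [List.flatMap_def, List.map_flatten, List.flatten_flatten, Function.comp_def]

theorem W_succ (n : ℕ) : W (n + 1) = (W n).flatMap phi :=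
  Function.iterate_succ_apply' _ _ _

theorem phi_add_two (a : ℕ) : phi (a + 2) = (phi a).map (· + 2) := by
  simp only [phi, Nat.add_mod_right]
  split <;> simp [add_assoc]

theorem flatMap_phi_map_add_two (w : List ℕ) :
    (w.map (· + 2)).flatMap phi = (w.flatMap phi).map (· + 2) := by
  simp [List.flatMap_map, List.map_flatMap, phi_add_two]

theorem W_succ_factorisation (n : ℕ) :
    W (n + 1) = [0, 1] ++ ((List.range n).map (fun i => (W i).map (· + 2))).flatten := by
  induction n with
  | zero => rfl
  | succ n ih =>
    rw [W_succ, ih, List.flatMap_append, List.flatMap_flatten, List.map_map,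
      List.range_succ_eq_map]
    simp [Function.comp_def, flatMap_phi_map_add_two, ← W_succ]
    rfl

/-- For all `k ≥ 2`, `W k = 01 · ∏_{i=0}^{k-2} (2 ⊕ W i)`. -/
theorem zww_prefix_factorisation : ∀ k : ℕ, 2 ≤ k →
    W k = [0, 1] ++ ((List.range (k - 1)).map (fun i => (W i).map (· + 2))).flatten := by
  rintro (_ | k) hk
  · omega
  · exact W_succ_factorisation k
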